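/- arXiv:1911.05911 — 7 statements merged into one kernel-verified Lean document; each statement's English description precedes it below -/
import Mathlib

section
/- Let T be a finite set obtained from a finite set S by replacing at most an ε-fraction of the points of S with arbitrary points (so |T| = |S| and |S ∩ T| ≥ (1-ε)|S|), with ε ≤ 1/3. Let U_S be the uniform distribution on S and let W be any probability distribution supported on T with W(x) ≤ 1/(|T|(1-ε)) for all x ∈ T. Then the total variation distance between U_S and W is at most 2ε/(1-ε) ≤ 3ε. -/
open Finset

/-- Any probability distribution `W` supported on an `ε`-corrupted version `T` of `S`
with weights bounded by `1/(|T|(1-ε))` is within total variation distance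
`2ε/(1-ε) ≤ 3ε` of the uniform distribution on `S`. -/
theorem stmt1 (α : Type*) [DecidableEq α] (S T : Finset α) (ε : ℝ)
    (hε : 0 < ε) (hε3 : ε ≤ 1 / 3) (hS : S.Nonempty)
    (hcard : T.card = S.card)
    (hST : (1 - ε) * (S.card : ℝ) ≤ ((S ∩ T).card : ℝ))
    (W : α → ℝ) (hW0 : ∀ x, 0 ≤ W x) (hWsupp : ∀ x ∉ T, W x = 0)
    (hWsum : ∑ x ∈ T, W x = 1)
    (hWmax : ∀ x ∈ T, W x ≤ 1 / ((T.card : ℝ) * (1 - ε))) :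
    (∑ x ∈ S ∪ T, max ((if x ∈ S then (S.card : ℝ)⁻¹ else 0) - W x) 0) ≤ 2 * ε / (1 - ε)
      ∧ 2 * ε / (1 - ε) ≤ 3 * ε := by
  have hε1 : (0:ℝ) < 1 - ε := by linarith
  refine ⟨?_, by rw [div_le_iff₀ hε1]; nlinarith⟩
  have hn0 : 0 < (S.card : ℝ) := by exact Nat.cast_pos.mpr (Finset.card_pos.mpr hS)
  set f : α → ℝ := fun x => if x ∈ S then (S.card : ℝ)⁻¹ else 0 with hf
  have hf0 : ∀ x, 0 ≤ f x := by intro x; simp only [hf]; positivity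
  have hfsum : ∑ x ∈ S ∪ T, f x = 1 := by
    rw [hf, Finset.sum_ite_mem, Finset.union_inter_cancel_left, Finset.sum_const,
      nsmul_eq_mul, mul_inv_cancel₀ hn0.ne']
  have hgsum : ∑ x ∈ S ∪ T, W x = 1 := by
    rw [← Finset.sum_subset Finset.subset_union_right (fun x _ hx => hWsupp x hx), hWsum]
  have heq : ∑ x ∈ S ∪ T, max (f x - W x) 0
      = ∑ x ∈ S ∪ T, max (W x - f x) 0 + ∑ x ∈ S ∪ T, (f x - W x) := by
    rw [← Finset.sum_add_distrib]
    apply Finset.sum_congr rfl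
    intro x _
    rcases le_total (f x) (W x) with h | h
    · rw [max_eq_right (by linarith), max_eq_left (by linarith)]; ring
    · rw [max_eq_left (by linarith), max_eq_right (by linarith)]; ring
  have hzero : ∑ x ∈ S ∪ T, (f x - W x) = 0 := by
    rw [Finset.sum_sub_distrib, hfsum, hgsum]; ring
  rw [heq, hzero, add_zero]
  -- now bound ∑ max (W x - f x) 0
  have hsplit : S ∪ T = (S \ T) ∪ T := (Finset.sdiff_union_self_eq_union).symm
  rw [hsplit, Finset.sum_union Finset.sdiff_disjoint]
  have h1 : ∑ x ∈ S \ T, max (W x - f x) 0 = 0 := by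
    apply Finset.sum_eq_zero
    intro x hx
    rw [hWsupp x (Finset.mem_sdiff.mp hx).2, zero_sub, max_eq_right (by linarith [hf0 x])]
  rw [h1, zero_add, ← Finset.sum_inter_add_sum_sdiff T S]
  have hTn : (T.card : ℝ) = (S.card : ℝ) := by exact_mod_cast hcard
  have hWmax' : ∀ x ∈ T, W x ≤ 1 / ((S.card : ℝ) * (1 - ε)) := by
    intro x hx; rw [← hTn]; exact hWmax x hx
  have hA : ∑ x ∈ T ∩ S, max (W x - f x) 0
      ≤ ((T ∩ S).card : ℝ) * (ε / ((S.card : ℝ) * (1 - ε))) := by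
    rw [← nsmul_eq_mul]
    apply Finset.sum_le_card_nsmul
    intro x hx
    obtain ⟨hxT, hxS⟩ := Finset.mem_inter.mp hx
    have hw := hWmax' x hxT
    apply max_le _ (by positivity)
    simp only [hf, if_pos hxS]
    have : 1 / ((S.card : ℝ) * (1 - ε)) - (S.card : ℝ)⁻¹
        = ε / ((S.card : ℝ) * (1 - ε)) := by
      field_simp; ring
    linarith [this]
  have hB : ∑ x ∈ T \ S, max (W x - f x) 0
      ≤ ((T \ S).card : ℝ) * (1 / ((S.card : ℝ) * (1 - ε))) := by
    rw [← nsmul_eq_mul]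
    apply Finset.sum_le_card_nsmul
    intro x hx
    obtain ⟨hxT, hxS⟩ := Finset.mem_sdiff.mp hx
    have hw := hWmax' x hxT
    apply max_le _ (by positivity)
    simp only [hf, if_neg hxS]
    linarith
  have hcardTS : ((T ∩ S).card : ℝ) ≤ (S.card : ℝ) := by
    rw [← hTn]; exact_mod_cast Finset.card_le_card Finset.inter_subset_left
  have hcardTdS : ((T \ S).card : ℝ) ≤ ε * (S.card : ℝ) := by
    have h := Finset.card_sdiff_add_card_inter T S
    have h' : ((T \ S).card : ℝ) + ((T ∩ S).card : ℝ) = (S.card : ℝ) := by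
      rw [← hTn]; exact_mod_cast congrArg (Nat.cast : ℕ → ℝ) h
    have : ((S ∩ T).card : ℝ) = ((T ∩ S).card : ℝ) := by rw [Finset.inter_comm]
    linarith
  have hpos : 0 < (S.card : ℝ) * (1 - ε) := by positivity
  have e1 : (S.card : ℝ) * (ε / ((S.card : ℝ) * (1 - ε))) = ε / (1 - ε) := by
    field_simp
  have e2 : ε * (S.card : ℝ) * (1 / ((S.card : ℝ) * (1 - ε))) = ε / (1 - ε) := by
    field_simp
  have hA' : ((T ∩ S).card : ℝ) * (ε / ((S.card : ℝ) * (1 - ε))) ≤ ε / (1 - ε) := by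
    rw [← e1]; exact mul_le_mul_of_nonneg_right hcardTS (by positivity)
  have hB' : ((T \ S).card : ℝ) * (1 / ((S.card : ℝ) * (1 - ε))) ≤ ε / (1 - ε) := by
    rw [← e2]; exact mul_le_mul_of_nonneg_right hcardTdS (by positivity)
  have : 2 * ε / (1 - ε) = ε / (1 - ε) + ε / (1 - ε) := by ring
  linarith
end

section
/- Let X be a distribution on ℝ^d with mean μ and covariance Σ ⪯ σ²I. Then for any event (subset) E with probability mass at most ε under X (ε < 1), the conditional mean satisfies ‖E[X | E^c] - μ‖₂ ≤ σ·√(ε/(1-ε)). In particular, removing an ε-fraction of the mass of a bounded-covariance distribution shifts the mean by at most O(σ√ε). -/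
open MeasureTheory
open scoped RealInnerProductSpace

/-!
For a unit vector `v`, the projection `Y = ⟪v, X - μ⟫` has mean zero, so `∫_{Eᶜ} Y = -∫_E Y`.
Cauchy–Schwarz on `E` and on `Eᶜ` gives `(∫_{Eᶜ} Y)² ≤ ℙ(E) ℙ(Eᶜ) 𝔼[Y²] ≤ ℙ(E) ℙ(Eᶜ) σ²`; dividing
by `ℙ(Eᶜ)²` bounds the component of the shifted mean along `v`, and `v` pointing along the shift
bounds its norm by `σ √(ℙ(E) / ℙ(Eᶜ)) ≤ σ √(ε / (1 - ε))`.
-/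

theorem sq_integral_le_measureReal_univ_mul_integral_sq {α : Type*} [MeasurableSpace α]
    (ν : Measure α) [IsFiniteMeasure ν] {f : α → ℝ} (hf : Integrable f ν)
    (hf2 : Integrable (fun x => f x ^ 2) ν) :
    (∫ x, f x ∂ν) ^ 2 ≤ ν.real Set.univ * ∫ x, f x ^ 2 ∂ν := by
  set I := ∫ x, f x ∂ν
  -- `t ↦ ∫ (f - t)²` is a nonnegative quadratic, so its discriminant is nonpositive.
  have hquad : ∀ t : ℝ, 0 ≤ ν.real Set.univ * (t * t) + (-(2 * I)) * t + ∫ x, f x ^ 2 ∂ν := by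
    intro t
    have hexpand : ∫ x, (f x - t) ^ 2 ∂ν =
        ν.real Set.univ * (t * t) + (-(2 * I)) * t + ∫ x, f x ^ 2 ∂ν := by
      have hpoint : ∀ x, (f x - t) ^ 2 = f x ^ 2 - 2 * t * f x + t ^ 2 := fun x => by ring
      simp_rw [hpoint]
      have hlin : Integrable (fun x => 2 * t * f x) ν := hf.const_mul _
      have hdiff : Integrable (fun x => f x ^ 2 - 2 * t * f x) ν := hf2.sub hlin
      rw [integral_add hdiff (integrable_const _), integral_sub hf2 hlin,
        integral_const_mul, integral_const, smul_eq_mul]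
      ring
    exact hexpand ▸ integral_nonneg fun x => sq_nonneg _
  have hdisc := discrim_le_zero hquad
  rw [discrim] at hdisc
  linarith

theorem sq_setIntegral_compl_le_of_integral_eq_zero {Ω : Type*} [MeasurableSpace Ω]
    {ℙ : Measure Ω} [IsProbabilityMeasure ℙ] {Y : Ω → ℝ} (hY : Integrable Y ℙ)
    (hY2 : Integrable (fun ω => Y ω ^ 2) ℙ) (hmean : ∫ ω, Y ω ∂ℙ = 0)
    {E : Set Ω} (hE : MeasurableSet E) :
    (∫ ω in Eᶜ, Y ω ∂ℙ) ^ 2 ≤ ℙ.real E * ℙ.real Eᶜ * ∫ ω, Y ω ^ 2 ∂ℙ := by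
  have sq_setIntegral_le (s : Set Ω) :
      (∫ ω in s, Y ω ∂ℙ) ^ 2 ≤ ℙ.real s * ∫ ω in s, Y ω ^ 2 ∂ℙ := by
    simpa only [measureReal_restrict_apply_univ] using
      sq_integral_le_measureReal_univ_mul_integral_sq (ℙ.restrict s) hY.restrict hY2.restrict
  have hsplit : ∫ ω in E, Y ω ∂ℙ = -∫ ω in Eᶜ, Y ω ∂ℙ := by
    rw [eq_neg_iff_add_eq_zero, integral_add_compl hE hY, hmean]
  have hE_le := sq_setIntegral_le E
  rw [hsplit, neg_sq] at hE_le
  calc (∫ ω in Eᶜ, Y ω ∂ℙ) ^ 2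
      = ℙ.real Eᶜ * (∫ ω in Eᶜ, Y ω ∂ℙ) ^ 2 + ℙ.real E * (∫ ω in Eᶜ, Y ω ∂ℙ) ^ 2 := by
        rw [← add_mul, add_comm, probReal_add_probReal_compl hE, one_mul]
    _ ≤ ℙ.real Eᶜ * (ℙ.real E * ∫ ω in E, Y ω ^ 2 ∂ℙ)
        + ℙ.real E * (ℙ.real Eᶜ * ∫ ω in Eᶜ, Y ω ^ 2 ∂ℙ) := by
        gcongr
        exact sq_setIntegral_le Eᶜ
    _ = ℙ.real E * ℙ.real Eᶜ * ∫ ω, Y ω ^ 2 ∂ℙ := by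
        rw [← integral_add_compl hE hY2]
        ring

section InnerProductSpace

variable {F : Type*} [NormedAddCommGroup F] [InnerProductSpace ℝ F]

theorem norm_le_of_forall_inner_le {w : F} {C : ℝ} (hC : 0 ≤ C)
    (h : ∀ v : F, ‖v‖ = 1 → ⟪v, w⟫ ≤ C) : ‖w‖ ≤ C := by
  rcases eq_or_ne w 0 with rfl | hw
  · simpa using hC
  have hnorm : ⟪‖w‖⁻¹ • w, w⟫ = ‖w‖ := by
    rw [real_inner_smul_left, real_inner_self_eq_norm_sq]
    field_simp [norm_ne_zero_iff.mpr hw]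
  exact hnorm ▸ h _ (norm_smul_inv_norm hw)

variable [CompleteSpace F] {Ω : Type*} [MeasurableSpace Ω]

theorem inner_inv_smul_setIntegral_sub {ℙ : Measure Ω} [IsFiniteMeasure ℙ] {X : Ω → F}
    (hX : Integrable X ℙ) {s : Set Ω} (hs : ℙ.real s ≠ 0) (v μ : F) :
    ⟪v, (ℙ.real s)⁻¹ • (∫ ω in s, X ω ∂ℙ) - μ⟫ = (ℙ.real s)⁻¹ * ∫ ω in s, ⟪v, X ω - μ⟫ ∂ℙ := by
  have hXc : Integrable (fun ω => X ω - μ) ℙ := hX.sub (integrable_const μ)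
  rw [integral_inner hXc.restrict, integral_sub hX.restrict
    (integrable_const μ), setIntegral_const, inner_sub_right, inner_sub_right,
    real_inner_smul_right, real_inner_smul_right]
  field_simp

theorem norm_inv_smul_setIntegral_compl_sub_le {ℙ : Measure Ω} [IsProbabilityMeasure ℙ]
    {X : Ω → F} (hX : Integrable X ℙ) {μ : F} (hμ : ∫ ω, X ω ∂ℙ = μ) {σ : ℝ} (hσ : 0 ≤ σ)
    (hsq : ∀ v : F, Integrable (fun ω => ⟪v, X ω - μ⟫ ^ 2) ℙ)
    (hcov : ∀ v : F, ‖v‖ = 1 → ∫ ω, ⟪v, X ω - μ⟫ ^ 2 ∂ℙ ≤ σ ^ 2)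
    {E : Set Ω} (hE : MeasurableSet E) (hEc : ℙ.real Eᶜ ≠ 0) :
    ‖(ℙ.real Eᶜ)⁻¹ • (∫ ω in Eᶜ, X ω ∂ℙ) - μ‖ ≤ σ * √(ℙ.real E / ℙ.real Eᶜ) := by
  refine norm_le_of_forall_inner_le (by positivity) fun v hv => ?_
  have hXc : Integrable (fun ω => X ω - μ) ℙ := hX.sub (integrable_const μ)
  have hmean : ∫ ω, ⟪v, X ω - μ⟫ ∂ℙ = 0 := by
    rw [integral_inner hXc, integral_sub hX (integrable_const μ), hμ]
    simp
  have hsq_le : (⟪v, (ℙ.real Eᶜ)⁻¹ • (∫ ω in Eᶜ, X ω ∂ℙ) - μ⟫) ^ 2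
      ≤ σ ^ 2 * (ℙ.real E / ℙ.real Eᶜ) := by
    rw [inner_inv_smul_setIntegral_sub hX hEc, mul_pow]
    calc ((ℙ.real Eᶜ)⁻¹) ^ 2 * (∫ ω in Eᶜ, ⟪v, X ω - μ⟫ ∂ℙ) ^ 2
        ≤ ((ℙ.real Eᶜ)⁻¹) ^ 2 * (ℙ.real E * ℙ.real Eᶜ * σ ^ 2) := by
          gcongr
          exact (sq_setIntegral_compl_le_of_integral_eq_zero (hXc.const_inner v) (hsq v) hmean hE).trans
            (by gcongr; exact hcov v hv)
      _ = σ ^ 2 * (ℙ.real E / ℙ.real Eᶜ) := by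
          field_simp
  calc _ ≤ |⟪v, (ℙ.real Eᶜ)⁻¹ • (∫ ω in Eᶜ, X ω ∂ℙ) - μ⟫| := le_abs_self _
    _ ≤ √(σ ^ 2 * (ℙ.real E / ℙ.real Eᶜ)) := Real.abs_le_sqrt hsq_le
    _ = σ * √(ℙ.real E / ℙ.real Eᶜ) := by rw [Real.sqrt_mul (sq_nonneg σ), Real.sqrt_sq hσ]

end InnerProductSpace

theorem stmt4_general (d : ℕ) (Ω : Type*) [MeasurableSpace Ω] (ℙ : Measure Ω)
    [IsProbabilityMeasure ℙ] (X : Ω → EuclideanSpace ℝ (Fin d))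
    (hXint : Integrable X ℙ)
    (μ : EuclideanSpace ℝ (Fin d)) (hμ : ∫ ω, X ω ∂ℙ = μ)
    (σ ε : ℝ) (hσ : 0 ≤ σ) (hε0 : 0 ≤ ε) (hε1 : ε < 1)
    (hsq : ∀ v : EuclideanSpace ℝ (Fin d), Integrable (fun ω => ⟪v, X ω - μ⟫ ^ 2) ℙ)
    (hcov : ∀ v : EuclideanSpace ℝ (Fin d), ‖v‖ = 1 →
      ∫ ω, ⟪v, X ω - μ⟫ ^ 2 ∂ℙ ≤ σ ^ 2)
    (E : Set Ω) (hE : MeasurableSet E) (hEε : ℙ E ≤ ENNReal.ofReal ε) :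
    ‖(ℙ Eᶜ).toReal⁻¹ • (∫ ω in Eᶜ, X ω ∂ℙ) - μ‖ ≤ σ * Real.sqrt (ε / (1 - ε)) := by
  have hpε : ℙ.real E ≤ ε := ENNReal.toReal_le_of_le_ofReal hε0 hEε
  have hq : ℙ.real Eᶜ = 1 - ℙ.real E := probReal_compl_eq_one_sub hE
  have hq_pos : 0 < ℙ.real Eᶜ := by linarith
  calc _ ≤ σ * √(ℙ.real E / ℙ.real Eᶜ) :=
        norm_inv_smul_setIntegral_compl_sub_le hXint hμ hσ hsq hcov hE hq_pos.ne'
    _ ≤ σ * √(ε / (1 - ε)) := by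
        gcongr
        rw [hq]
        gcongr

/-- Removing an event of probability at most `ε` from a distribution with covariance
`⪯ σ²I` shifts the mean by at most `σ·√(ε/(1-ε))`. -/
theorem stmt4 (d : ℕ) (Ω : Type*) [MeasurableSpace Ω] (ℙ : Measure Ω)
    [IsProbabilityMeasure ℙ] (X : Ω → EuclideanSpace ℝ (Fin d))
    (hXmeas : AEMeasurable X ℙ) (hXint : Integrable X ℙ)
    (μ : EuclideanSpace ℝ (Fin d)) (hμ : ∫ ω, X ω ∂ℙ = μ)
    (σ ε : ℝ) (hσ : 0 ≤ σ) (hε0 : 0 ≤ ε) (hε1 : ε < 1)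
    (hsq : ∀ v : EuclideanSpace ℝ (Fin d), Integrable (fun ω => ⟪v, X ω - μ⟫ ^ 2) ℙ)
    (hcov : ∀ v : EuclideanSpace ℝ (Fin d), ‖v‖ = 1 →
      ∫ ω, ⟪v, X ω - μ⟫ ^ 2 ∂ℙ ≤ σ ^ 2)
    (E : Set Ω) (hE : MeasurableSet E) (hEε : ℙ E ≤ ENNReal.ofReal ε) :
    ‖(ℙ Eᶜ).toReal⁻¹ • (∫ ω in Eᶜ, X ω ∂ℙ) - μ‖ ≤ σ * Real.sqrt (ε / (1 - ε)) :=
  stmt4_general d Ω ℙ X hXint μ hμ σ ε hσ hε0 hε1 hsq hcov E hE hEε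
end

section
/- Let X be a distribution on ℝ^d with covariance Σ_X ⪯ σ²I, and let Y be a distribution with d_TV(X,Y) ≤ ε for ε ≤ 1/2. If Y also has covariance ⪯ σ²I, then ‖E[X] - E[Y]‖₂ ≤ O(σ√ε). -/
/-!
Project onto the unit vector `v` pointing along the difference of the means; this reduces the
claim to real functions. By the Hahn decomposition, two probability measures at total variation
distance at most `ε` split as `μ = ρ + κ` and `ν = ρ' + κ` with a common part `κ` and remainders
of equal mass `m ≤ ε`. Since `ρ ≤ μ`, Cauchy–Schwarz gives `|∫ f dρ - m a| ≤ √m σ` for the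
`μ`-mean `a`, and likewise for `ρ'` and the `ν`-mean `b`. As `a - b = ∫ f dρ - ∫ f dρ'`, this
yields `(1 - m) (a - b) ≤ 2 σ √m`, and `m ≤ 1/2` gives `a - b ≤ 4 σ √ε`.
-/

open MeasureTheory
open scoped RealInnerProductSpace

section

variable {X : Type*} [MeasurableSpace X]

lemma sq_integral_le_measureReal_univ_mul_integral_sq_s5 {ρ : Measure X} [IsFiniteMeasure ρ]
    {g : X → ℝ} (hg : Integrable g ρ) (hg2 : Integrable (fun x => g x ^ 2) ρ) :
    (∫ x, g x ∂ρ) ^ 2 ≤ ρ.real Set.univ * ∫ x, g x ^ 2 ∂ρ := by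
  have hquad : ∀ c : ℝ,
      0 ≤ ρ.real Set.univ * (c * c) + 2 * (∫ x, g x ∂ρ) * c + ∫ x, g x ^ 2 ∂ρ := by
    intro c
    have hexpand : ∫ x, (g x + c) ^ 2 ∂ρ =
        ρ.real Set.univ * (c * c) + 2 * (∫ x, g x ∂ρ) * c + ∫ x, g x ^ 2 ∂ρ := by
      simp_rw [add_sq]
      have hlin : Integrable (fun x => 2 * g x * c) ρ := (hg.const_mul 2).mul_const c
      rw [integral_add (f := fun x => g x ^ 2 + 2 * g x * c) (hg2.add hlin)
        (integrable_const _), integral_add hg2 hlin, integral_mul_const, integral_const_mul,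
        integral_const, smul_eq_mul]
      ring
    exact hexpand ▸ integral_nonneg fun x => sq_nonneg _
  have := discrim_le_zero hquad
  rw [discrim] at this
  linarith

lemma abs_integral_sub_measureReal_univ_mul_le {μ ρ : Measure X} [IsFiniteMeasure μ]
    (hρμ : ρ ≤ μ) {f : X → ℝ} {a σ : ℝ} (hσ : 0 ≤ σ) (hf : Integrable f μ)
    (hf2 : Integrable (fun x => (f x - a) ^ 2) μ) (hvar : ∫ x, (f x - a) ^ 2 ∂μ ≤ σ ^ 2) :
    |∫ x, f x ∂ρ - ρ.real Set.univ * a| ≤ √(ρ.real Set.univ) * σ := by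
  have := isFiniteMeasure_of_le μ hρμ
  have hfa : Integrable (fun x => f x - a) ρ := (hf.mono_measure hρμ).sub (integrable_const a)
  have hcentre : ∫ x, f x ∂ρ - ρ.real Set.univ * a = ∫ x, (f x - a) ∂ρ := by
    rw [integral_sub (hf.mono_measure hρμ) (integrable_const a), integral_const, smul_eq_mul]
  have hvarρ : ∫ x, (f x - a) ^ 2 ∂ρ ≤ σ ^ 2 :=
    (integral_mono_measure hρμ (ae_of_all _ fun x => sq_nonneg _) hf2).trans hvar
  rw [hcentre, ← Real.sqrt_sq hσ, ← Real.sqrt_mul measureReal_nonneg]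
  refine Real.abs_le_sqrt ?_
  calc (∫ x, (f x - a) ∂ρ) ^ 2 ≤ ρ.real Set.univ * ∫ x, (f x - a) ^ 2 ∂ρ :=
        sq_integral_le_measureReal_univ_mul_integral_sq_s5 hfa (hf2.mono_measure hρμ)
    _ ≤ ρ.real Set.univ * σ ^ 2 := by gcongr

lemma exists_eq_add_eq_add_of_tv_le {μ ν : Measure X} [IsProbabilityMeasure μ]
    [IsProbabilityMeasure ν] {ε : ℝ}
    (hTV : ∀ A : Set X, MeasurableSet A → |(μ A).toReal - (ν A).toReal| ≤ ε) :
    ∃ ρ ρ' κ : Measure X, μ = ρ + κ ∧ ν = ρ' + κ ∧ 1 - ε ≤ κ.real Set.univ := by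
  obtain ⟨S, hS⟩ := exists_isHahnDecomposition ν μ
  set κ := ν.restrict S + μ.restrict Sᶜ
  have hκμ : κ ≤ μ := calc
    κ ≤ μ.restrict S + μ.restrict Sᶜ := add_le_add_left hS.le_on _
    _ = μ := Measure.restrict_add_restrict_compl hS.measurableSet
  have hκν : κ ≤ ν := calc
    κ ≤ ν.restrict S + ν.restrict Sᶜ := add_le_add_right hS.ge_on_compl _
    _ = ν := Measure.restrict_add_restrict_compl hS.measurableSet
  refine ⟨μ - κ, ν - κ, κ, (Measure.sub_add_cancel_of_le hκμ).symm,
    (Measure.sub_add_cancel_of_le hκν).symm, ?_⟩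
  have hTV_S := (abs_le.mp (hTV S hS.measurableSet)).2
  rw [measureReal_add_apply, measureReal_restrict_apply_univ, measureReal_restrict_apply_univ,
    probReal_compl_eq_one_sub hS.measurableSet]
  simp only [measureReal_def] at *
  linarith

lemma measureReal_univ_eq_one_sub_of_eq_add {η ζ κ : Measure X} [IsProbabilityMeasure η]
    (h : η = ζ + κ) : ζ.real Set.univ = 1 - κ.real Set.univ := by
  have := isFiniteMeasure_of_le η (h ▸ Measure.le_add_right le_rfl : ζ ≤ η)
  have := isFiniteMeasure_of_le η (h ▸ Measure.le_add_left le_rfl : κ ≤ η)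
  have h1 : η.real Set.univ = 1 := probReal_univ
  rw [h, measureReal_add_apply] at h1
  linarith

theorem integral_sub_integral_le_of_tv_le {μ ν : Measure X} [IsProbabilityMeasure μ]
    [IsProbabilityMeasure ν] {f : X → ℝ} {σ ε : ℝ} (hσ : 0 ≤ σ) (hε : ε ≤ 1 / 2)
    (hfμ : Integrable f μ) (hfν : Integrable f ν)
    (hμ2 : Integrable (fun x => (f x - ∫ y, f y ∂μ) ^ 2) μ)
    (hν2 : Integrable (fun x => (f x - ∫ y, f y ∂ν) ^ 2) ν)
    (hvarμ : ∫ x, (f x - ∫ y, f y ∂μ) ^ 2 ∂μ ≤ σ ^ 2)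
    (hvarν : ∫ x, (f x - ∫ y, f y ∂ν) ^ 2 ∂ν ≤ σ ^ 2)
    (hTV : ∀ A : Set X, MeasurableSet A → |(μ A).toReal - (ν A).toReal| ≤ ε) :
    ∫ x, f x ∂μ - ∫ x, f x ∂ν ≤ 4 * σ * √ε := by
  obtain ⟨ρ, ρ', κ, hμ, hν, hκ⟩ := exists_eq_add_eq_add_of_tv_le hTV
  set a := ∫ x, f x ∂μ
  set b := ∫ x, f x ∂ν
  have hρ := abs_integral_sub_measureReal_univ_mul_le (hμ ▸ Measure.le_add_right le_rfl)
    hσ hfμ hμ2 hvarμ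
  have hρ' := abs_integral_sub_measureReal_univ_mul_le (hν ▸ Measure.le_add_right le_rfl)
    hσ hfν hν2 hvarν
  have hρm := measureReal_univ_eq_one_sub_of_eq_add hμ
  rw [measureReal_univ_eq_one_sub_of_eq_add hν, ← hρm] at hρ'
  set m := ρ.real Set.univ
  have hab : a - b = ∫ x, f x ∂ρ - ∫ x, f x ∂ρ' := by
    obtain ⟨hfρ, hfκ⟩ := integrable_add_measure.mp (hμ ▸ hfμ)
    obtain ⟨hfρ', hfκ'⟩ := integrable_add_measure.mp (hν ▸ hfν)
    simp only [a, b]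
    rw [hμ, hν, integral_add_measure hfρ hfκ, integral_add_measure hfρ' hfκ']
    ring
  have hmε : m ≤ ε := by linarith
  have hkey : (1 - m) * (a - b) ≤ 2 * √m * σ := by
    linarith [(abs_le.mp hρ).2, (abs_le.mp hρ').1]
  rcases le_or_gt (a - b) 0 with hle | hpos
  · exact hle.trans (by positivity)
  calc a - b ≤ 2 * ((1 - m) * (a - b)) := by nlinarith
    _ ≤ 4 * σ * √m := by linarith
    _ ≤ 4 * σ * √ε := by gcongr

end

theorem norm_integral_sub_integral_le_of_tv_le {E : Type*} [NormedAddCommGroup E]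
    [InnerProductSpace ℝ E] [CompleteSpace E] [MeasurableSpace E] {P Q : Measure E}
    [IsProbabilityMeasure P] [IsProbabilityMeasure Q] {σ ε : ℝ} (hσ : 0 ≤ σ) (hε : ε ≤ 1 / 2)
    (hIP : Integrable (fun x => x) P) (hIQ : Integrable (fun x => x) Q)
    (hP2 : ∀ v : E, Integrable (fun x => ⟪v, x - ∫ y, y ∂P⟫ ^ 2) P)
    (hQ2 : ∀ v : E, Integrable (fun x => ⟪v, x - ∫ y, y ∂Q⟫ ^ 2) Q)
    (hVarP : ∀ v : E, ‖v‖ = 1 → ∫ x, ⟪v, x - ∫ y, y ∂P⟫ ^ 2 ∂P ≤ σ ^ 2)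
    (hVarQ : ∀ v : E, ‖v‖ = 1 → ∫ x, ⟪v, x - ∫ y, y ∂Q⟫ ^ 2 ∂Q ≤ σ ^ 2)
    (hTV : ∀ A : Set E, MeasurableSet A → |(P A).toReal - (Q A).toReal| ≤ ε) :
    ‖∫ x, x ∂P - ∫ x, x ∂Q‖ ≤ 4 * σ * √ε := by
  set w := ∫ x, x ∂P - ∫ x, x ∂Q
  rcases eq_or_ne w 0 with hw | hw
  · rw [hw, norm_zero]
    positivity
  set v := ‖w‖⁻¹ • w
  have hv : ‖v‖ = 1 := norm_smul_inv_norm hw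
  have hproj : ∀ {μ : Measure E}, Integrable (fun x => x) μ →
      ∀ x, ⟪v, x⟫ - ∫ y, ⟪v, y⟫ ∂μ = ⟪v, x - ∫ y, y ∂μ⟫ := fun h x => by
    rw [integral_inner h, inner_sub_right]
  calc ‖w‖ = ⟪v, w⟫ := by
        rw [real_inner_smul_left, real_inner_self_eq_norm_sq]
        field_simp
    _ = ∫ x, ⟪v, x⟫ ∂P - ∫ x, ⟪v, x⟫ ∂Q := by
        rw [integral_inner hIP, integral_inner hIQ, inner_sub_right]
    _ ≤ 4 * σ * √ε := integral_sub_integral_le_of_tv_le hσ hε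
        (hIP.const_inner v) (hIQ.const_inner v)
        (by simpa only [hproj hIP] using hP2 v) (by simpa only [hproj hIQ] using hQ2 v)
        (by simpa only [hproj hIP] using hVarP v hv)
        (by simpa only [hproj hIQ] using hVarQ v hv) hTV

/-- If `P` and `Q` are probability distributions on `ℝ^d`, both with covariance
`⪯ σ²I`, and total variation distance at most `ε ≤ 1/2`, then their means differ
by at most `O(σ√ε)` in `ℓ₂`-norm. -/
theorem stmt5 :
    ∃ C : ℝ, 0 < C ∧ ∀ (d : ℕ) (P Q : Measure (EuclideanSpace ℝ (Fin d)))
      (_ : IsProbabilityMeasure P) (_ : IsProbabilityMeasure Q) (σ ε : ℝ),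
      0 ≤ σ → 0 ≤ ε → ε ≤ 1 / 2 →
      Integrable (fun x => x) P → Integrable (fun x => x) Q →
      (∀ v : EuclideanSpace ℝ (Fin d),
        Integrable (fun x => ⟪v, x - ∫ y, y ∂P⟫ ^ 2) P ∧
        Integrable (fun x => ⟪v, x - ∫ y, y ∂Q⟫ ^ 2) Q) →
      (∀ v : EuclideanSpace ℝ (Fin d), ‖v‖ = 1 →
        (∫ x, ⟪v, x - ∫ y, y ∂P⟫ ^ 2 ∂P) ≤ σ ^ 2) →
      (∀ v : EuclideanSpace ℝ (Fin d), ‖v‖ = 1 →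
        (∫ x, ⟪v, x - ∫ y, y ∂Q⟫ ^ 2 ∂Q) ≤ σ ^ 2) →
      (∀ A : Set (EuclideanSpace ℝ (Fin d)), MeasurableSet A →
        |(P A).toReal - (Q A).toReal| ≤ ε) →
      ‖(∫ x, x ∂P) - ∫ x, x ∂Q‖ ≤ C * σ * Real.sqrt ε :=
  ⟨4, by norm_num, fun _ _ _ _ _ _ _ hσ _ hε hIP hIQ hInt2 hVarP hVarQ hTV =>
    norm_integral_sub_integral_le_of_tv_le hσ hε hIP hIQ (fun v => (hInt2 v).1)
      (fun v => (hInt2 v).2) hVarP hVarQ hTV⟩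
end

section
/- Let S be an (ε, δ)-stable set with respect to a distribution X with mean μ_X, for ε, δ > 0 with δ at least a sufficiently large constant multiple of ε and ε sufficiently small. Let T be an ε-corrupted version of S and suppose Cov[T] has largest eigenvalue 1+λ with λ > 8δ²/ε. Let v be the top unit eigenvector of Cov[T], g(x) = (v·(x-μ_T))², and L the ε|T| elements of T with largest g-value. Define f(x) = g(x) for x ∈ L and f(x) = 0 otherwise. Then Σ_{x∈T} f(x) ≥ 2·Σ_{x∈T∩S} f(x). -/
open Finset
open scoped RealInnerProductSpace Classical

noncomputable def emean {d : ℕ} (A : Finset (EuclideanSpace ℝ (Fin d))) :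
    EuclideanSpace ℝ (Fin d) :=
  (A.card : ℝ)⁻¹ • ∑ x ∈ A, x

def IsStable {d : ℕ} (ε δ : ℝ) (S : Finset (EuclideanSpace ℝ (Fin d)))
    (μX : EuclideanSpace ℝ (Fin d)) : Prop :=
  ∀ v : EuclideanSpace ℝ (Fin d), ‖v‖ = 1 →
    ∀ S' ⊆ S, (1 - ε) * (S.card : ℝ) ≤ (S'.card : ℝ) →
      |(S'.card : ℝ)⁻¹ * ∑ x ∈ S', ⟪v, x - μX⟫| ≤ δ ∧
      |(S'.card : ℝ)⁻¹ * ∑ x ∈ S', ⟪v, x - μX⟫ ^ 2 - 1| ≤ δ ^ 2 / ε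

/-!
Write `a = ⟪v, μ_T - μ_X⟫` for the shift of the mean along `v`. The good points `T ∩ S` have
mean close to `μ_X`, and by Cauchy–Schwarz the at most `ε|T|` bad points can move the mean by
only `O(√(ε(1 + λ)))`, so `a` is small. Stability then bounds the `g`-mass of the good points by
`|T|(1 + O(δ²/ε))`, leaving at least `|T|(λ - O(δ²/ε))` of the total mass `|T|(1 + λ)` to the
bad points. On the other hand, an `ε`-fraction of `S` carries `g`-mass only `O(ε + δ²/ε)|T|`,
because the remaining `(1 - ε)`-fraction already has second moment about `1`. Since
`λ > 8δ²/ε`, the bad points therefore carry more than twice the good mass inside `L`, and since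
`L` collects the `ε|T| ≥ |T \ S|` largest values of `g`, the bad points carry no more than `L`.
-/

namespace Finset

variable {α : Type*}

theorem sum_le_sum_of_card_le_of_forall_le {s t : Finset α} {f : α → ℝ} (hst : #s ≤ #t)
    (hf : ∀ y ∈ s, ∀ x ∈ t, f y ≤ f x) (ht : ∀ x ∈ t, 0 ≤ f x) :
    ∑ y ∈ s, f y ≤ ∑ x ∈ t, f x := by
  rcases s.eq_empty_or_nonempty with rfl | hs
  · simpa using sum_nonneg ht
  have htne : t.Nonempty := card_pos.mp ((card_pos.mpr hs).trans_le hst)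
  set m := t.inf' htne f
  calc ∑ y ∈ s, f y ≤ #s • m := sum_le_card_nsmul _ _ _ fun y hy => le_inf' htne f (hf y hy)
    _ ≤ #t • m := nsmul_le_nsmul_left (le_inf' htne f ht) hst
    _ ≤ ∑ x ∈ t, f x := card_nsmul_le_sum _ _ _ fun x hx => inf'_le f hx

theorem sum_le_sum_top_of_card_le [DecidableEq α] {T L B : Finset α} {f : α → ℝ} (hBT : B ⊆ T)
    (hBL : #B ≤ #L) (htop : ∀ x ∈ L, ∀ y ∈ T \ L, f y ≤ f x) (hf : ∀ x ∈ L, 0 ≤ f x) :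
    ∑ x ∈ B, f x ≤ ∑ x ∈ L, f x := by
  have hdiff : ∑ y ∈ B \ L, f y ≤ ∑ x ∈ L \ B, f x :=
    sum_le_sum_of_card_le_of_forall_le (card_sdiff_le_card_sdiff_iff.mpr hBL)
      (fun y hy x hx => htop x (mem_sdiff.mp hx).1 y (sdiff_subset_sdiff hBT le_rfl hy))
      (fun x hx => hf x (mem_sdiff.mp hx).1)
  rw [← sum_inter_add_sum_sdiff B L, ← sum_inter_add_sum_sdiff L B, inter_comm]
  linarith

end Finset

theorem sum_sub_emean {d : ℕ} (T : Finset (EuclideanSpace ℝ (Fin d))) :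
    ∑ x ∈ T, (x - emean T) = 0 := by
  rcases T.eq_empty_or_nonempty with rfl | hT
  · simp
  rw [sum_sub_distrib, sum_const, emean, ← Nat.cast_smul_eq_nsmul ℝ, smul_smul,
    mul_inv_cancel₀ (by exact_mod_cast hT.card_pos.ne'), one_smul, sub_self]

theorem inner_sub_eq_sub_inner_sub {d : ℕ} (v x μ μX : EuclideanSpace ℝ (Fin d)) :
    ⟪v, x - μ⟫ = ⟪v, x - μX⟫ - ⟪v, μ - μX⟫ := by
  simp only [inner_sub_right]; ring

/-- The left side is `2 / |T|` times the bound on the good mass inside `L`, the right side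
`1 / |T|` times the lower bound on the bad mass. -/
theorem two_mul_good_tail_le_bad_excess {ε δ lam a : ℝ} (hε : 0 < ε) (hε₀ : ε ≤ 1 / 1000)
    (hδ : 10 * ε ≤ δ) (hlam : 8 * δ ^ 2 / ε < lam)
    (ha : (1 - ε) ^ 2 * a ^ 2 ≤ 2 * δ ^ 2 + 2 * ε * (1 + lam)) :
    2 * (9 / 8 * (ε + 2 * (δ ^ 2 / ε)) + 9 * ε * a ^ 2) ≤
      lam - (δ ^ 2 / ε + 2 * δ * |a| + a ^ 2) := by
  set σ := δ ^ 2 / ε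
  have hδσ : δ ^ 2 = σ * ε := (div_mul_cancel₀ _ hε.ne').symm
  have hlamσ : 8 * σ < lam := by rwa [mul_div_assoc] at hlam
  have hσ : 100 * ε ≤ σ := by
    have : (10 * ε) ^ 2 ≤ δ ^ 2 := pow_le_pow_left₀ (by positivity) hδ 2
    nlinarith
  have hσε : σ * ε ≤ σ / 1000 := by nlinarith
  have hlamε : ε * lam ≤ lam / 1000 := by nlinarith
  have ha2 : a ^ 2 ≤ σ / 40 + lam / 400 := by
    have : 998 / 1000 * a ^ 2 ≤ (1 - ε) ^ 2 * a ^ 2 := by gcongr; nlinarith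
    nlinarith
  have hεa2 : ε * a ^ 2 ≤ a ^ 2 / 1000 := by nlinarith [sq_nonneg a]
  have hcross : 2 * δ * |a| ≤ 4 * δ ^ 2 + a ^ 2 / 4 := by
    nlinarith [sq_nonneg (2 * δ - |a| / 2), sq_abs a]
  nlinarith

namespace IsStable

variable {d : ℕ} {ε δ : ℝ} {S S' : Finset (EuclideanSpace ℝ (Fin d))}
  {μX v : EuclideanSpace ℝ (Fin d)}

theorem abs_sum_inner_le (hS : IsStable ε δ S μX) (hv : ‖v‖ = 1) (hS' : S' ⊆ S)
    (hcard : (1 - ε) * #S ≤ #S') : |∑ x ∈ S', ⟪v, x - μX⟫| ≤ δ * #S' := by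
  rcases S'.eq_empty_or_nonempty with rfl | hne
  · simp
  have hpos : (0 : ℝ) < #S' := by exact_mod_cast hne.card_pos
  have h := (hS v hv S' hS' hcard).1
  rwa [abs_mul, abs_inv, abs_of_pos hpos, inv_mul_le_iff₀ hpos, mul_comm] at h

theorem sum_inner_sq_mem_Icc (hS : IsStable ε δ S μX) (hv : ‖v‖ = 1) (hS' : S' ⊆ S)
    (hcard : (1 - ε) * #S ≤ #S') :
    ∑ x ∈ S', ⟪v, x - μX⟫ ^ 2 ∈ Set.Icc (#S' * (1 - δ ^ 2 / ε)) (#S' * (1 + δ ^ 2 / ε)) := by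
  rcases S'.eq_empty_or_nonempty with rfl | hne
  · simp
  have hpos : (0 : ℝ) < #S' := by exact_mod_cast hne.card_pos
  obtain ⟨hlo, hhi⟩ := abs_le.mp (hS v hv S' hS' hcard).2
  exact ⟨(le_inv_mul_iff₀ hpos).mp (by linarith), (inv_mul_le_iff₀ hpos).mp (by linarith)⟩

theorem sum_inner_sq_le_of_card_le (hS : IsStable ε δ S μX) (hv : ‖v‖ = 1) (hε : 0 ≤ ε)
    {R : Finset (EuclideanSpace ℝ (Fin d))} (hRS : R ⊆ S) (hR : (#R : ℝ) ≤ ε * #S) :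
    ∑ x ∈ R, ⟪v, x - μX⟫ ^ 2 ≤ (ε + 2 * (δ ^ 2 / ε)) * #S := by
  have hσ : 0 ≤ δ ^ 2 / ε := by positivity
  have hcard : (#(S \ R) : ℝ) = #S - #R := by
    rw [card_sdiff_of_subset hRS, Nat.cast_sub (card_le_card hRS)]
  have hall := (hS.sum_inner_sq_mem_Icc hv subset_rfl (by nlinarith)).2
  have hrest := (hS.sum_inner_sq_mem_Icc hv sdiff_subset (by rw [hcard]; linarith)).1
  rw [hcard] at hrest
  rw [← sum_sdiff hRS] at hall
  nlinarith [mul_nonneg (Nat.cast_nonneg (α := ℝ) #R) hσ]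

theorem sum_inner_sub_sq_le (hS : IsStable ε δ S μX) (hv : ‖v‖ = 1) (hS' : S' ⊆ S)
    (hcard : (1 - ε) * #S ≤ #S') (μ : EuclideanSpace ℝ (Fin d)) :
    ∑ x ∈ S', ⟪v, x - μ⟫ ^ 2 ≤
      #S' * (1 + δ ^ 2 / ε + 2 * δ * |⟪v, μ - μX⟫| + ⟪v, μ - μX⟫ ^ 2) := by
  set a := ⟪v, μ - μX⟫
  have hexpand : ∑ x ∈ S', ⟪v, x - μ⟫ ^ 2 =
      ∑ x ∈ S', ⟪v, x - μX⟫ ^ 2 - 2 * a * ∑ x ∈ S', ⟪v, x - μX⟫ + #S' * a ^ 2 := by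
    rw [mul_sum, ← sum_sub_distrib, ← nsmul_eq_mul, ← sum_const, ← sum_add_distrib]
    exact sum_congr rfl fun x _ => by rw [inner_sub_eq_sub_inner_sub v x μ μX]; ring
  have hcross : -(2 * a * ∑ x ∈ S', ⟪v, x - μX⟫) ≤ 2 * |a| * (δ * #S') := by
    calc -(2 * a * ∑ x ∈ S', ⟪v, x - μX⟫) ≤ 2 * |a| * |∑ x ∈ S', ⟪v, x - μX⟫| :=
          (neg_le_abs _).trans_eq (by rw [abs_mul, abs_mul, abs_two])
      _ ≤ 2 * |a| * (δ * #S') := by gcongr; exact hS.abs_sum_inner_le hv hS' hcard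
  linarith [(hS.sum_inner_sq_mem_Icc hv hS' hcard).2]

theorem sum_inner_sub_sq_le_of_card_le (hS : IsStable ε δ S μX) (hv : ‖v‖ = 1) (hε : 0 ≤ ε)
    {R : Finset (EuclideanSpace ℝ (Fin d))} (hRS : R ⊆ S) (hR : (#R : ℝ) ≤ ε * #S)
    (μ : EuclideanSpace ℝ (Fin d)) :
    ∑ x ∈ R, ⟪v, x - μ⟫ ^ 2 ≤
      9 / 8 * ((ε + 2 * (δ ^ 2 / ε)) * #S) + 9 * #R * ⟪v, μ - μX⟫ ^ 2 := by
  have hpt : ∀ x ∈ R, ⟪v, x - μ⟫ ^ 2 ≤ 9 / 8 * ⟪v, x - μX⟫ ^ 2 + 9 * ⟪v, μ - μX⟫ ^ 2 :=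
    fun x _ => by
      rw [inner_sub_eq_sub_inner_sub v x μ μX]
      nlinarith [sq_nonneg (⟪v, x - μX⟫ + 8 * ⟪v, μ - μX⟫)]
  calc ∑ x ∈ R, ⟪v, x - μ⟫ ^ 2
      ≤ ∑ x ∈ R, (9 / 8 * ⟪v, x - μX⟫ ^ 2 + 9 * ⟪v, μ - μX⟫ ^ 2) := sum_le_sum hpt
    _ = 9 / 8 * ∑ x ∈ R, ⟪v, x - μX⟫ ^ 2 + 9 * #R * ⟪v, μ - μX⟫ ^ 2 := by
      rw [sum_add_distrib, ← mul_sum, sum_const, nsmul_eq_mul]; ring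
    _ ≤ _ := by gcongr; exact hS.sum_inner_sq_le_of_card_le hv hε hRS hR

theorem sq_inner_emean_sub_le (hS : IsStable ε δ S μX) (hv : ‖v‖ = 1) (hε : ε ≤ 1)
    {T : Finset (EuclideanSpace ℝ (Fin d))} (hT : T.Nonempty) (hTS : #T = #S)
    (hgood : (1 - ε) * #S ≤ #(T ∩ S)) :
    (1 - ε) ^ 2 * ⟪v, emean T - μX⟫ ^ 2 ≤
      2 * δ ^ 2 + 2 * ε * ((#T : ℝ)⁻¹ * ∑ x ∈ T, ⟪v, x - emean T⟫ ^ 2) := by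
  set a := ⟪v, emean T - μX⟫
  have hn : (0 : ℝ) < #T := by exact_mod_cast hT.card_pos
  rw [← hTS] at hgood
  have hcards : (#(T ∩ S) : ℝ) + #(T \ S) = #T := by
    exact_mod_cast card_inter_add_card_sdiff T S
  have hB : (#(T \ S) : ℝ) ≤ ε * #T := by linarith
  have hGn : (#(T ∩ S) : ℝ) ≤ #T := by linarith [(#(T \ S)).cast_nonneg (α := ℝ)]
  have hcentered : ∑ x ∈ T, ⟪v, x - emean T⟫ = 0 := by
    rw [← inner_sum, sum_sub_emean, inner_zero_right]
  have hshift : #(T ∩ S) * a = ∑ x ∈ T ∩ S, ⟪v, x - μX⟫ + ∑ x ∈ T \ S, ⟪v, x - emean T⟫ := by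
    have hG : ∑ x ∈ T ∩ S, ⟪v, x - μX⟫ = ∑ x ∈ T ∩ S, ⟪v, x - emean T⟫ + #(T ∩ S) * a := by
      rw [← nsmul_eq_mul, ← sum_const, ← sum_add_distrib]
      exact sum_congr rfl fun x _ => by rw [inner_sub_eq_sub_inner_sub v x (emean T) μX]; ring
    linarith [sum_inter_add_sum_sdiff T S fun x => ⟪v, x - emean T⟫]
  have hgood_sq : (∑ x ∈ T ∩ S, ⟪v, x - μX⟫) ^ 2 ≤ δ ^ 2 * #T ^ 2 := by
    have h := hS.abs_sum_inner_le hv inter_subset_right (hTS ▸ hgood)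
    calc (∑ x ∈ T ∩ S, ⟪v, x - μX⟫) ^ 2 ≤ (δ * #(T ∩ S)) ^ 2 :=
          sq_le_sq.mpr (h.trans (le_abs_self _))
      _ ≤ δ ^ 2 * #T ^ 2 := by rw [mul_pow]; gcongr
  have hbad_sq : (∑ x ∈ T \ S, ⟪v, x - emean T⟫) ^ 2 ≤
      ε * #T * ∑ x ∈ T, ⟪v, x - emean T⟫ ^ 2 :=
    calc (∑ x ∈ T \ S, ⟪v, x - emean T⟫) ^ 2
        ≤ #(T \ S) * ∑ x ∈ T \ S, ⟪v, x - emean T⟫ ^ 2 := sq_sum_le_card_mul_sum_sq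
      _ ≤ ε * #T * ∑ x ∈ T, ⟪v, x - emean T⟫ ^ 2 :=
        mul_le_mul hB (sum_le_sum_of_subset_of_nonneg sdiff_subset fun _ _ _ => sq_nonneg _)
          (sum_nonneg fun _ _ => sq_nonneg _) (by linarith [(#(T \ S)).cast_nonneg (α := ℝ)])
  have hscale : ((1 - ε) * #T) ^ 2 ≤ (#(T ∩ S) : ℝ) ^ 2 :=
    pow_le_pow_left₀ (mul_nonneg (by linarith) hn.le) hgood 2
  have hrhs : (2 * δ ^ 2 + 2 * ε * ((#T : ℝ)⁻¹ * ∑ x ∈ T, ⟪v, x - emean T⟫ ^ 2)) * #T ^ 2 =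
      2 * (δ ^ 2 * #T ^ 2) + 2 * (ε * #T * ∑ x ∈ T, ⟪v, x - emean T⟫ ^ 2) := by
    field_simp
  refine le_of_mul_le_mul_right ?_ (pow_pos hn 2)
  rw [hrhs]
  set P := ∑ x ∈ T ∩ S, ⟪v, x - μX⟫
  set Q := ∑ x ∈ T \ S, ⟪v, x - emean T⟫
  calc (1 - ε) ^ 2 * a ^ 2 * #T ^ 2 = ((1 - ε) * #T) ^ 2 * a ^ 2 := by ring
    _ ≤ (#(T ∩ S) : ℝ) ^ 2 * a ^ 2 := by gcongr
    _ = (P + Q) ^ 2 := by rw [← hshift]; ring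
    _ ≤ 2 * P ^ 2 + 2 * Q ^ 2 := by linarith [sq_nonneg (P - Q)]
    _ ≤ _ := by linarith

theorem two_mul_sum_inter_inter_le_sum_sdiff (hS : IsStable ε δ S μX) (hv : ‖v‖ = 1)
    (hε : 0 < ε) (hε₀ : ε ≤ 1 / 1000) (hδ : 10 * ε ≤ δ) {lam : ℝ} (hlam : 8 * δ ^ 2 / ε < lam)
    {T L : Finset (EuclideanSpace ℝ (Fin d))} (hT : T.Nonempty) (hTS : #T = #S)
    (hgood : (1 - ε) * #S ≤ #(T ∩ S))
    (hvar : (#T : ℝ)⁻¹ * ∑ x ∈ T, ⟪v, x - emean T⟫ ^ 2 = 1 + lam) (hL : (#L : ℝ) ≤ ε * #T) :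
    2 * ∑ x ∈ T ∩ S ∩ L, ⟪v, x - emean T⟫ ^ 2 ≤ ∑ x ∈ T \ S, ⟪v, x - emean T⟫ ^ 2 := by
  set a := ⟪v, emean T - μX⟫
  have hn : (0 : ℝ) < #T := by exact_mod_cast hT.card_pos
  have hδ0 : 0 ≤ δ := by linarith
  have hTS' : (#T : ℝ) = #S := by exact_mod_cast hTS
  have htotal : ∑ x ∈ T, ⟪v, x - emean T⟫ ^ 2 = #T * (1 + lam) := by
    rw [← hvar, mul_inv_cancel_left₀ hn.ne']
  have hshift := hS.sq_inner_emean_sub_le hv (by linarith) hT hTS hgood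
  rw [hvar] at hshift
  have hG : ∑ x ∈ T ∩ S, ⟪v, x - emean T⟫ ^ 2 ≤
      #T * (1 + δ ^ 2 / ε + 2 * δ * |a| + a ^ 2) :=
    (hS.sum_inner_sub_sq_le hv inter_subset_right hgood (emean T)).trans
      (mul_le_mul_of_nonneg_right (by exact_mod_cast card_le_card inter_subset_left)
        (by linarith [mul_nonneg hδ0 (abs_nonneg a), sq_nonneg a,
          div_nonneg (sq_nonneg δ) hε.le]))
  have hRcard : (#(T ∩ S ∩ L) : ℝ) ≤ ε * #T :=
    le_trans (by exact_mod_cast card_le_card inter_subset_right) hL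
  have hR := hS.sum_inner_sub_sq_le_of_card_le hv hε.le
    (inter_subset_left.trans inter_subset_right) (hTS' ▸ hRcard) (emean T)
  rw [← hTS'] at hR
  have hsplit := sum_inter_add_sum_sdiff T S fun x => ⟪v, x - emean T⟫ ^ 2
  have hbudget := two_mul_good_tail_le_bad_excess hε hε₀ hδ hlam hshift
  nlinarith [mul_le_mul_of_nonneg_right hRcard (sq_nonneg a)]

end IsStable

/-- Universal filter: with `v` the top eigenvector of `Cov[T]`, `g(x) = (v·(x-μ_T))²`,
and `L` the `ε|T|` elements of `T` with largest `g`-value, the function `f = g·1_L`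
satisfies `Σ_{x∈T} f(x) ≥ 2·Σ_{x∈T∩S} f(x)`. -/
theorem stmt9 :
    ∃ c ε₀ : ℝ, 0 < c ∧ 0 < ε₀ ∧ ∀ (d : ℕ) (ε δ lam : ℝ)
      (S T L : Finset (EuclideanSpace ℝ (Fin d)))
      (μX v : EuclideanSpace ℝ (Fin d)),
      0 < ε → ε ≤ ε₀ → c * ε ≤ δ →
      IsStable ε δ S μX →
      T.card = S.card → (1 - ε) * (S.card : ℝ) ≤ ((T ∩ S).card : ℝ) →
      ‖v‖ = 1 → 8 * δ ^ 2 / ε < lam →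
      (T.card : ℝ)⁻¹ * ∑ x ∈ T, ⟪v, x - emean T⟫ ^ 2 = 1 + lam →
      (∀ w : EuclideanSpace ℝ (Fin d), ‖w‖ = 1 →
        (T.card : ℝ)⁻¹ * ∑ x ∈ T, ⟪w, x - emean T⟫ ^ 2 ≤ 1 + lam) →
      L ⊆ T → (L.card : ℝ) = ε * (T.card : ℝ) →
      (∀ x ∈ L, ∀ y ∈ T \ L, ⟪v, y - emean T⟫ ^ 2 ≤ ⟪v, x - emean T⟫ ^ 2) →
      2 * ∑ x ∈ T ∩ S, (if x ∈ L then ⟪v, x - emean T⟫ ^ 2 else 0) ≤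
        ∑ x ∈ T, (if x ∈ L then ⟪v, x - emean T⟫ ^ 2 else 0) := by
  refine ⟨10, 1 / 1000, by norm_num, by norm_num, ?_⟩
  intro d ε δ lam S T L μX v hε hε₀ hδ hS hTS hgood hv hlam hvar _ hLT hL htop
  rcases T.eq_empty_or_nonempty with rfl | hT
  · simp
  rw [sum_ite_mem, sum_ite_mem, inter_eq_right.mpr hLT]
  have hbad : #(T \ S) ≤ #L := by
    have hcards : (#(T ∩ S) : ℝ) + #(T \ S) = #T := by
      exact_mod_cast card_inter_add_card_sdiff T S
    have hTS' : (#T : ℝ) = #S := by exact_mod_cast hTS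
    exact_mod_cast (show (#(T \ S) : ℝ) ≤ #L by rw [hL, hTS']; linarith)
  calc 2 * ∑ x ∈ T ∩ S ∩ L, ⟪v, x - emean T⟫ ^ 2
      ≤ ∑ x ∈ T \ S, ⟪v, x - emean T⟫ ^ 2 :=
        hS.two_mul_sum_inter_inter_le_sum_sdiff hv hε hε₀ hδ hlam hT hTS hgood hvar hL.le
    _ ≤ ∑ x ∈ L, ⟪v, x - emean T⟫ ^ 2 :=
        sum_le_sum_top_of_card_le sdiff_subset hbad htop fun _ _ => sq_nonneg _
end

section
/- Let Σ and Σ' be d×d positive semidefinite matrices with Σ ⪯ Σ'. Define, for a symmetric d×d matrix A, the quadratic forms Q(A) = 2·‖Σ^{1/2} A Σ^{1/2}‖_F² and Q'(A) = 2·‖(Σ')^{1/2} A (Σ')^{1/2}‖_F². Then Q(A) ≤ Q'(A) for all symmetric A. Equivalently, if X ∼ N(0,Σ) and X' ∼ N(0,Σ'), then Cov[vec(XX^T)] ⪯ Cov[vec(X'X'^T)]. -/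
open Finset

namespace Matrix.PosSemidef

open scoped ComplexOrder

/-- The positive semidefinite square root, with its definition from the older Mathlib. -/
noncomputable def sqrt {n 𝕜 : Type*} [Fintype n] [DecidableEq n] [RCLike 𝕜] {A : Matrix n n 𝕜}
    (hA : A.PosSemidef) : Matrix n n 𝕜 :=
  hA.1.eigenvectorUnitary.1 * diagonal ((↑) ∘ (√·) ∘ hA.1.eigenvalues) *
  (star hA.1.eigenvectorUnitary : Matrix n n 𝕜)

end Matrix.PosSemidef

/-!
With `R = Σ^{1/2}`, symmetry of `A` and `R` gives `‖R A R‖_F² = tr(A Σ A Σ)`, and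
`tr(A Σ' A Σ') - tr(A Σ A Σ) = tr(A (Σ' - Σ) A Σ') + tr(A Σ A (Σ' - Σ))`.
Both terms are traces of products of two positive semidefinite matrices, hence nonnegative.
-/

open Matrix
open scoped MatrixOrder ComplexOrder

namespace Matrix.PosSemidef

variable {n 𝕜 : Type*} [Fintype n] [DecidableEq n] [RCLike 𝕜] {A B : Matrix n n 𝕜}

theorem sqrt_eq_cfc_sqrt (hA : A.PosSemidef) : hA.sqrt = CFC.sqrt A := by
  rw [CFC.sqrt_eq_cfc, cfc_nnreal_eq_real _ A, hA.1.cfc_eq]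
  simp [IsHermitian.cfc, sqrt, Unitary.conjStarAlgAut_apply, Function.comp_def,
    Real.coe_toNNReal', hA.eigenvalues_nonneg]

theorem posSemidef_sqrt (hA : A.PosSemidef) : hA.sqrt.PosSemidef := by
  rw [hA.sqrt_eq_cfc_sqrt, ← nonneg_iff_posSemidef]
  exact CFC.sqrt_nonneg A

theorem sqrt_mul_self (hA : A.PosSemidef) : hA.sqrt * hA.sqrt = A := by
  rw [hA.sqrt_eq_cfc_sqrt]
  exact CFC.sqrt_mul_sqrt_self A hA.nonneg

theorem trace_mul_nonneg (hA : A.PosSemidef) (hB : B.PosSemidef) : 0 ≤ (A * B).trace := by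
  have hS := hA.posSemidef_sqrt
  rw [← hA.sqrt_mul_self, mul_assoc, trace_mul_comm, mul_assoc]
  simpa [← mul_assoc, hS.isHermitian.eq] using (hB.mul_mul_conjTranspose_same hA.sqrt).trace_nonneg

end Matrix.PosSemidef

namespace Matrix

theorem sum_sq_eq_trace_transpose_mul {m n : Type*} [Fintype m] [Fintype n]
    (M : Matrix m n ℝ) : ∑ i, ∑ j, M i j ^ 2 = (Mᵀ * M).trace := by
  simp only [trace, diag, mul_apply, transpose_apply, sq]
  exact Finset.sum_comm

theorem PosSemidef.sum_sq_sqrt_mul_mul_sqrt {n : Type*} [Fintype n] [DecidableEq n]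
    {S A : Matrix n n ℝ} (hS : S.PosSemidef) (hA : A.IsSymm) :
    ∑ i, ∑ j, (hS.sqrt * A * hS.sqrt) i j ^ 2 = (A * S * A * S).trace := by
  have hR : hS.sqrtᵀ = hS.sqrt := hS.posSemidef_sqrt.isHermitian.eq
  have hRR : hS.sqrt * hS.sqrt = S := hS.sqrt_mul_self
  set R := hS.sqrt
  have hsymm : (R * A * R)ᵀ = R * A * R := by
    rw [transpose_mul, transpose_mul, hR, hA.eq, mul_assoc]
  calc ∑ i, ∑ j, (R * A * R) i j ^ 2
      = (R * (A * (R * R) * A * R)).trace := by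
        rw [sum_sq_eq_trace_transpose_mul, hsymm]
        congr 1
        noncomm_ring
    _ = (A * S * A * S).trace := by
        rw [hRR, trace_mul_comm, mul_assoc, hRR]

theorem trace_mul_mul_mul_self_le {n 𝕜 : Type*} [Fintype n] [DecidableEq n] [RCLike 𝕜]
    {A S S' : Matrix n n 𝕜} (hA : A.IsHermitian) (hS : S.PosSemidef)
    (hle : (S' - S).PosSemidef) :
    (A * S * A * S).trace ≤ (A * S' * A * S').trace := by
  have hS' : S'.PosSemidef := by simpa using hS.add hle
  have conj_posSemidef {D : Matrix n n 𝕜} (hD : D.PosSemidef) : (A * D * A).PosSemidef := by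
    simpa [hA.eq] using hD.mul_mul_conjTranspose_same A
  have hsplit : A * S' * A * S'
      = A * S * A * S + ((A * (S' - S) * A) * S' + (A * S * A) * (S' - S)) := by
    noncomm_ring
  rw [hsplit, trace_add, trace_add]
  exact le_add_of_nonneg_right <| add_nonneg
    ((conj_posSemidef hle).trace_mul_nonneg hS') ((conj_posSemidef hS).trace_mul_nonneg hle)

end Matrix

/-- Monotonicity of the quadratic form `A ↦ 2‖Σ^{1/2} A Σ^{1/2}‖_F²` in the Loewner
order: if `Σ ⪯ Σ'` then `2‖Σ^{1/2} A Σ^{1/2}‖_F² ≤ 2‖Σ'^{1/2} A Σ'^{1/2}‖_F²` for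
every symmetric matrix `A`; equivalently `Cov[vec(XX^T)] ⪯ Cov[vec(X'X'^T)]` for
`X ∼ N(0,Σ)`, `X' ∼ N(0,Σ')`. -/
theorem stmt13 (d : ℕ) (Sig Sig' : Matrix (Fin d) (Fin d) ℝ)
    (hSig : Sig.PosSemidef) (hSig' : Sig'.PosSemidef)
    (hle : (Sig' - Sig).PosSemidef)
    (A : Matrix (Fin d) (Fin d) ℝ) (hA : A.IsSymm) :
    2 * ∑ i, ∑ j, ((hSig.sqrt * A * hSig.sqrt) i j) ^ 2
      ≤ 2 * ∑ i, ∑ j, ((hSig'.sqrt * A * hSig'.sqrt) i j) ^ 2 := by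
  rw [hSig.sum_sq_sqrt_mul_mul_sqrt hA, hSig'.sum_sq_sqrt_mul_mul_sqrt hA]
  gcongr
  exact trace_mul_mul_mul_self_le (isHermitian_iff_isSymm.mpr hA) hSig hle
end

section
/- Let W be a probability distribution on a finite set T ⊂ ℝ^d with mean μ_W and suppose Var[v·W] = 1+λ for a unit vector v, with λ > c·δ²/ε for a large constant c. Let W* be another distribution on T with mean μ_{W*} and Var[v·W*] ≤ 1 + δ²/ε, and suppose |v·(μ_W - μ_X)| ≤ a and |v·(μ_{W*} - μ_X)| ≤ b for a common vector μ_X. Define the linear functional L(Y) = E_Y[(v·(Y - μ_W))²]. Then L(W*) ≤ 1 + δ²/ε + 2a² + 2b², and in particular if 2a² + 2b² < λ - δ²/ε then L(W*) < L(W): L is a separating hyperplane between W and W*. -/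
open Finset
open scoped RealInnerProductSpace Classical

/-- Separation oracle for the unknown convex programming method: with
`L(Y) = E_Y[(v·(Y-μ_W))²]`, if `Var[v·W] = 1+λ` with `λ` large and `W*` has variance
at most `1+δ²/ε` in direction `v`, then `L(W*) ≤ 1 + δ²/ε + 2a² + 2b²`, and if
`2a² + 2b² < λ - δ²/ε` then `L(W*) < L(W)`. -/
theorem stmt18 (d : ℕ) (T : Finset (EuclideanSpace ℝ (Fin d)))
    (W Wstar : EuclideanSpace ℝ (Fin d) → ℝ)
    (v μX : EuclideanSpace ℝ (Fin d)) (hv : ‖v‖ = 1)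
    (ε δ lam c a b : ℝ) (hε : 0 < ε) (hc : 0 < c)
    (hW0 : ∀ x, 0 ≤ W x) (hWsum : ∑ x ∈ T, W x = 1)
    (hWs0 : ∀ x, 0 ≤ Wstar x) (hWssum : ∑ x ∈ T, Wstar x = 1)
    (hlam : c * δ ^ 2 / ε < lam)
    (hvarW : ∑ x ∈ T, W x * ⟪v, x - ∑ y ∈ T, W y • y⟫ ^ 2 = 1 + lam)
    (hvarWs : ∑ x ∈ T, Wstar x * ⟪v, x - ∑ y ∈ T, Wstar y • y⟫ ^ 2 ≤ 1 + δ ^ 2 / ε)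
    (ha : |⟪v, (∑ y ∈ T, W y • y) - μX⟫| ≤ a)
    (hb : |⟪v, (∑ y ∈ T, Wstar y • y) - μX⟫| ≤ b) :
    (∑ x ∈ T, Wstar x * ⟪v, x - ∑ y ∈ T, W y • y⟫ ^ 2
        ≤ 1 + δ ^ 2 / ε + 2 * a ^ 2 + 2 * b ^ 2) ∧
    (2 * a ^ 2 + 2 * b ^ 2 < lam - δ ^ 2 / ε →
      ∑ x ∈ T, Wstar x * ⟪v, x - ∑ y ∈ T, W y • y⟫ ^ 2
        < ∑ x ∈ T, W x * ⟪v, x - ∑ y ∈ T, W y • y⟫ ^ 2) := by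

  set μW := ∑ y ∈ T, W y • y with hμW
  set μS := ∑ y ∈ T, Wstar y • y with hμS
  set t := ⟪v, μS - μW⟫ with ht
  have hzero : ∑ x ∈ T, Wstar x * ⟪v, x - μS⟫ = 0 := by
    have hS : ⟪v, μS⟫ = ∑ x ∈ T, Wstar x * ⟪v, x⟫ := by
      rw [hμS, inner_sum]
      exact Finset.sum_congr rfl fun x _ => real_inner_smul_right v x (Wstar x)
    calc ∑ x ∈ T, Wstar x * ⟪v, x - μS⟫
        = ∑ x ∈ T, (Wstar x * ⟪v, x⟫ - Wstar x * ⟪v, μS⟫) := by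
          refine Finset.sum_congr rfl fun x _ => ?_
          rw [inner_sub_right]; ring
      _ = (∑ x ∈ T, Wstar x * ⟪v, x⟫) - (∑ x ∈ T, Wstar x) * ⟪v, μS⟫ := by
          rw [Finset.sum_sub_distrib, Finset.sum_mul]
      _ = 0 := by rw [hWssum, hS]; ring
  have hdecomp : ∑ x ∈ T, Wstar x * ⟪v, x - μW⟫ ^ 2
      = (∑ x ∈ T, Wstar x * ⟪v, x - μS⟫ ^ 2) + t ^ 2 := by
    have h1 : ∀ x : EuclideanSpace ℝ (Fin d), ⟪v, x - μW⟫ = ⟪v, x - μS⟫ + t := by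
      intro x
      rw [ht, inner_sub_right, inner_sub_right, inner_sub_right]; ring
    calc ∑ x ∈ T, Wstar x * ⟪v, x - μW⟫ ^ 2
        = ∑ x ∈ T, (Wstar x * ⟪v, x - μS⟫ ^ 2
            + (2 * t) * (Wstar x * ⟪v, x - μS⟫) + t ^ 2 * Wstar x) := by
          refine Finset.sum_congr rfl fun x _ => ?_
          rw [h1 x]; ring
      _ = (∑ x ∈ T, Wstar x * ⟪v, x - μS⟫ ^ 2)
            + (2 * t) * (∑ x ∈ T, Wstar x * ⟪v, x - μS⟫)
            + t ^ 2 * (∑ x ∈ T, Wstar x) := by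
          rw [Finset.sum_add_distrib, Finset.sum_add_distrib, ← Finset.mul_sum,
            ← Finset.mul_sum]
      _ = (∑ x ∈ T, Wstar x * ⟪v, x - μS⟫ ^ 2) + t ^ 2 := by
          rw [hzero, hWssum]; ring
  have htsq : t ^ 2 ≤ 2 * a ^ 2 + 2 * b ^ 2 := by
    have hteq : t = ⟪v, μS - μX⟫ - ⟪v, μW - μX⟫ := by
      rw [ht, inner_sub_right, inner_sub_right, inner_sub_right]; ring
    have ha2 : ⟪v, μW - μX⟫ ^ 2 ≤ a ^ 2 := by
      rw [← sq_abs]; exact pow_le_pow_left₀ (abs_nonneg _) ha 2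
    have hb2 : ⟪v, μS - μX⟫ ^ 2 ≤ b ^ 2 := by
      rw [← sq_abs]; exact pow_le_pow_left₀ (abs_nonneg _) hb 2
    rw [hteq]
    nlinarith [sq_nonneg (⟪v, μS - μX⟫ + ⟪v, μW - μX⟫)]
  have hmain : ∑ x ∈ T, Wstar x * ⟪v, x - μW⟫ ^ 2
      ≤ 1 + δ ^ 2 / ε + 2 * a ^ 2 + 2 * b ^ 2 := by
    rw [hdecomp]; linarith
  exact ⟨hmain, fun h => by rw [hvarW]; linarith⟩
end

section
/- Let S ⊂ ℝ be a finite set such that for all t > 0, the fraction of x ∈ S with |x - μ| > 2t + 2 is at most e^{-t²/2}, and let T ⊇ hypotheses be a set with |T \ S| ≤ ε|T| and |T| ≥ (1-ε)|S|. If for every threshold t₀ > 0, Pr_{x∼_u T}[|x - μ_T| > 2t₀ + 2 + r] ≤ 4e^{-t₀²/2} (with |μ - μ_T| ≤ r), then Σ_{x∈T\S} |x - μ_T|² ≤ |T|·(O(ε·(2 + r + 10√(log(1/ε)))²) + O(ε²·(√(log(1/ε)) + r))). -/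
/-!
Put `s = √(log (1/ε))`, so that `exp (-(2s)²/2) = ε²`, and `M = 4s + 2 + r`. Outliers within
distance `M` of `μ_T` contribute at most `|T \ S| M² ≤ ε |T| M²`. The points of `T` beyond `M`
fall into shells `M + 2k < |x - μ_T| ≤ M + 2k + 2`; the tail bound at `t₀ = 2s + k` leaves at most
`4 ε² e^{-k} |T|` points in shell `k`, each contributing at most `(M + 2 + 2k)² ≤ 3 · 2^k (M + 2)²`,
and `∑ (2/e)^k ≤ 4`. Both parts are `O(ε (M + 2)²)`.
-/

open Finset
open scoped Classical
open Real

lemma sq_succ_le_three_mul_two_pow (k : ℕ) : ((k : ℝ) + 1) ^ 2 ≤ 3 * 2 ^ k := by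
  induction k with
  | zero => norm_num
  | succ n ih =>
    have hn : (n : ℝ) + 1 ≤ 2 ^ n := by exact_mod_cast Nat.lt_two_pow_self
    push_cast
    nlinarith [pow_succ (2 : ℝ) n]

lemma add_two_mul_sq_le {A : ℝ} (hA : 2 ≤ A) (k : ℕ) : (A + 2 * k) ^ 2 ≤ 3 * 2 ^ k * A ^ 2 := by
  have hk : (0 : ℝ) ≤ k := k.cast_nonneg
  calc (A + 2 * k) ^ 2 ≤ (A * (k + 1)) ^ 2 := by gcongr; nlinarith
    _ = A ^ 2 * (k + 1) ^ 2 := by ring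
    _ ≤ A ^ 2 * (3 * 2 ^ k) := by gcongr; exact sq_succ_le_three_mul_two_pow k
    _ = 3 * 2 ^ k * A ^ 2 := by ring

lemma sum_two_mul_exp_neg_one_pow_le (s : Finset ℕ) : ∑ k ∈ s, (2 * exp (-1)) ^ k ≤ 4 := by
  have hq : 2 * exp (-1) ≤ 3 / 4 := by
    rw [exp_neg, ← div_eq_mul_inv, div_le_iff₀ (exp_pos 1)]
    linarith [exp_one_gt_d9]
  have hq0 : 0 ≤ 2 * exp (-1) := by positivity
  calc ∑ k ∈ s, (2 * exp (-1)) ^ k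
      ≤ ∑' k : ℕ, (2 * exp (-1)) ^ k :=
        (summable_geometric_of_lt_one hq0 (by linarith)).sum_le_tsum s fun _ _ => by positivity
    _ = (1 - 2 * exp (-1))⁻¹ := tsum_geometric_of_lt_one hq0 (by linarith)
    _ ≤ 4 := by rw [inv_le_comm₀ (by linarith) (by norm_num)]; linarith

lemma ceil_sub_one_lt_and_le {u : ℝ} (hu : 0 < u) :
    ((⌈u⌉₊ - 1 : ℕ) : ℝ) < u ∧ u ≤ ((⌈u⌉₊ - 1 : ℕ) : ℝ) + 1 := by
  rw [Nat.cast_pred (Nat.ceil_pos.mpr hu)]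
  exact ⟨by linarith [Nat.ceil_lt_add_one hu.le], by linarith [Nat.le_ceil u]⟩

lemma sum_sq_filter_abs_le_le {α : Type*} (U : Finset α) (f : α → ℝ) (M : ℝ) :
    ∑ x ∈ U with |f x| ≤ M, f x ^ 2 ≤ #U * M ^ 2 := by
  calc ∑ x ∈ U with |f x| ≤ M, f x ^ 2
      ≤ #(U.filter fun x => |f x| ≤ M) • M ^ 2 := by
        refine sum_le_card_nsmul _ _ _ fun x hx => ?_
        rw [← sq_abs]
        exact pow_le_pow_left₀ (abs_nonneg _) (mem_filter.mp hx).2 2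
    _ ≤ #U * M ^ 2 := by
        rw [nsmul_eq_mul]; gcongr; exact filter_subset _ _

theorem sum_sq_filter_lt_abs_le_of_tail {α : Type*} (T : Finset α) (f : α → ℝ) {M c : ℝ}
    (hM : 0 ≤ M)
    (htail : ∀ k : ℕ, (#(T.filter fun x => M + 2 * k < |f x|) : ℝ) ≤ c * exp (-k)) :
    ∑ x ∈ T with M < |f x|, f x ^ 2 ≤ 12 * (M + 2) ^ 2 * c := by
  set R := T.filter fun x => M < |f x|
  set shell : α → ℕ := fun x => ⌈(|f x| - M) / 2⌉₊ - 1
  have hshell : ∀ x ∈ R, M + 2 * shell x < |f x| ∧ |f x| ≤ M + 2 + 2 * shell x := by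
    intro x hx
    have := ceil_sub_one_lt_and_le (u := (|f x| - M) / 2) (by linarith [(mem_filter.mp hx).2])
    constructor <;> linarith
  have hc : 0 ≤ c := by
    have := htail 0
    simp only [Nat.cast_zero, neg_zero, exp_zero, mul_one] at this
    exact (Nat.cast_nonneg _).trans this
  have hfiber : ∀ k, ∑ x ∈ R with shell x = k, f x ^ 2
      ≤ 3 * (M + 2) ^ 2 * c * (2 * exp (-1)) ^ k := by
    intro k
    have hcard : (#(R.filter fun x => shell x = k) : ℝ) ≤ c * exp (-k) := by
      refine le_trans ?_ (htail k)
      gcongr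
      intro x hx
      obtain ⟨hxR, rfl⟩ := mem_filter.mp hx
      exact mem_filter.mpr ⟨(mem_filter.mp hxR).1, (hshell x hxR).1⟩
    calc ∑ x ∈ R with shell x = k, f x ^ 2
        ≤ #(R.filter fun x => shell x = k) • (M + 2 + 2 * k) ^ 2 := by
          refine sum_le_card_nsmul _ _ _ fun x hx => ?_
          obtain ⟨hxR, rfl⟩ := mem_filter.mp hx
          rw [← sq_abs]
          exact pow_le_pow_left₀ (abs_nonneg _) (hshell x hxR).2 2
      _ ≤ c * exp (-k) * (3 * 2 ^ k * (M + 2) ^ 2) := by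
          rw [nsmul_eq_mul]
          gcongr
          exact add_two_mul_sq_le (by linarith) k
      _ = 3 * (M + 2) ^ 2 * c * (2 * exp (-1)) ^ k := by
          rw [mul_pow, ← exp_nat_mul]; ring_nf
  rw [← sum_fiberwise_of_maps_to (fun x hx => mem_image_of_mem shell hx) (fun x => f x ^ 2)]
  calc ∑ k ∈ R.image shell, ∑ x ∈ R with shell x = k, f x ^ 2
      ≤ ∑ k ∈ R.image shell, 3 * (M + 2) ^ 2 * c * (2 * exp (-1)) ^ k :=
        sum_le_sum fun k _ => hfiber k
    _ = 3 * (M + 2) ^ 2 * c * ∑ k ∈ R.image shell, (2 * exp (-1)) ^ k := by rw [mul_sum]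
    _ ≤ 3 * (M + 2) ^ 2 * c * 4 := by gcongr; exact sum_two_mul_exp_neg_one_pow_le _
    _ = 12 * (M + 2) ^ 2 * c := by ring

lemma exp_neg_add_sq_div_two_le {a k : ℝ} (ha : 1 ≤ a) (hk : 0 ≤ k) :
    exp (-(a + k) ^ 2 / 2) ≤ exp (-a ^ 2 / 2) * exp (-k) := by
  rw [← exp_add, exp_le_exp]
  nlinarith

lemma half_le_sqrt_log_inv {ε : ℝ} (hε : 0 < ε) (hε2 : ε < 1 / 2) : 1 / 2 ≤ √(log (1 / ε)) := by
  refine le_sqrt_of_sq_le ?_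
  have h2 : log 2 ≤ log (1 / ε) :=
    log_le_log (by norm_num) (by rw [le_div_iff₀ hε]; linarith)
  linarith [log_two_gt_d9]

lemma exp_neg_sq_two_mul_sqrt_log_inv {ε : ℝ} (hε : 0 < ε) (hε1 : ε ≤ 1) :
    exp (-(2 * √(log (1 / ε))) ^ 2 / 2) = ε ^ 2 := by
  have hlog : 0 ≤ log (1 / ε) := log_nonneg (by rw [le_div_iff₀ hε]; linarith)
  rw [mul_pow, sq_sqrt hlog, one_div, log_inv,
    show -(2 ^ 2 * -log ε) / 2 = log (ε ^ 2) by rw [log_pow]; push_cast; ring,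
    exp_log (by positivity)]

lemma card_filter_lt_abs_le_of_tail {α : Type*} {T : Finset α} {f : α → ℝ} {ε r : ℝ}
    (hε : 0 < ε) (hε2 : ε < 1 / 2) (hT : (0 : ℝ) < #T)
    (htail : ∀ t : ℝ, 0 < t →
      (#(T.filter fun x => 2 * t + 2 + r < |f x|) : ℝ) / #T ≤ 4 * exp (-t ^ 2 / 2))
    (k : ℕ) :
    (#(T.filter fun x => 2 * (2 * √(log (1 / ε))) + 2 + r + 2 * k < |f x|) : ℝ)
      ≤ 4 * ε ^ 2 * #T * exp (-k) := by
  set s := √(log (1 / ε))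
  have hs : 1 / 2 ≤ s := half_le_sqrt_log_inv hε hε2
  have h := htail (2 * s + k) (by positivity)
  rw [div_le_iff₀ hT] at h
  calc (#(T.filter fun x => 2 * (2 * s) + 2 + r + 2 * k < |f x|) : ℝ)
      = #(T.filter fun x => 2 * (2 * s + k) + 2 + r < |f x|) := by congr! 4; ring
    _ ≤ 4 * exp (-(2 * s + k) ^ 2 / 2) * #T := h
    _ ≤ 4 * (ε ^ 2 * exp (-k)) * #T := by
        rw [← exp_neg_sq_two_mul_sqrt_log_inv hε (by linarith)]
        gcongr
        exact exp_neg_add_sq_div_two_le (by linarith) k.cast_nonneg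
    _ = 4 * ε ^ 2 * #T * exp (-k) := by ring

/-- Key computation in the basic filtering lemma: if the clean set `S` satisfies
Gaussian-type tail bounds around `μ`, `T` has at most an `ε`-fraction of outliers,
`|μ - μ_T| ≤ r`, and no threshold `t₀` violates the `4·e^{-t₀²/2}` tail bound for `T`,
then the total squared contribution of the outliers `T \ S` to the variance is at most
`|T|·(O(ε·(2 + r + 10√(log(1/ε)))²) + O(ε²·(√(log(1/ε)) + r)))`. -/
theorem stmt19 :
    ∃ C : ℝ, 0 < C ∧ ∀ (ε r : ℝ) (S T : Finset ℝ) (μ : ℝ),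
      0 < ε → ε < 1 / 2 → 0 ≤ r → S.Nonempty → T.Nonempty →
      (∀ t : ℝ, 0 < t →
        ((S.filter fun x => 2 * t + 2 < |x - μ|).card : ℝ) / (S.card : ℝ)
          ≤ Real.exp (-t ^ 2 / 2)) →
      ((T \ S).card : ℝ) ≤ ε * (T.card : ℝ) →
      (1 - ε) * (S.card : ℝ) ≤ (T.card : ℝ) →
      |μ - (T.card : ℝ)⁻¹ * ∑ y ∈ T, y| ≤ r →
      (∀ t₀ : ℝ, 0 < t₀ →
        ((T.filter fun x =>
            2 * t₀ + 2 + r < |x - (T.card : ℝ)⁻¹ * ∑ y ∈ T, y|).card : ℝ) / (T.card : ℝ)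
          ≤ 4 * Real.exp (-t₀ ^ 2 / 2)) →
      ∑ x ∈ T \ S, (x - (T.card : ℝ)⁻¹ * ∑ y ∈ T, y) ^ 2
        ≤ (T.card : ℝ) *
            (C * ε * (2 + r + 10 * Real.sqrt (Real.log (1 / ε))) ^ 2
              + C * ε ^ 2 * (Real.sqrt (Real.log (1 / ε)) + r)) := by
  refine ⟨49, by norm_num, fun ε r S T μ hε hε2 hr _ hT _ hTS _ _ hTtail => ?_⟩
  set μT := (#T : ℝ)⁻¹ * ∑ y ∈ T, y
  set s := √(log (1 / ε))
  have hs : 1 / 2 ≤ s := half_le_sqrt_log_inv hε hε2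
  have hTpos : (0 : ℝ) < #T := by exact_mod_cast hT.card_pos
  set M := 2 * (2 * s) + 2 + r
  have htail := card_filter_lt_abs_le_of_tail (f := (· - μT)) hε hε2 hTpos hTtail
  calc ∑ x ∈ T \ S, (x - μT) ^ 2
      = ∑ x ∈ T \ S with |x - μT| ≤ M, (x - μT) ^ 2
          + ∑ x ∈ T \ S with M < |x - μT|, (x - μT) ^ 2 := by
        rw [← sum_filter_add_sum_filter_not _ (fun x => |x - μT| ≤ M)]
        simp only [not_le]
    _ ≤ ε * #T * M ^ 2 + ∑ x ∈ T with M < |x - μT|, (x - μT) ^ 2 := by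
        gcongr ?_ + ?_
        · exact (sum_sq_filter_abs_le_le _ (· - μT) M).trans (by gcongr)
        · exact sum_le_sum_of_subset_of_nonneg (filter_subset_filter _ sdiff_subset)
            fun _ _ _ => sq_nonneg _
    _ ≤ ε * #T * M ^ 2 + 12 * (M + 2) ^ 2 * (4 * ε ^ 2 * #T) := by
        gcongr
        exact sum_sq_filter_lt_abs_le_of_tail T (· - μT) (by positivity) htail
    _ ≤ #T * (49 * ε * (2 + r + 10 * s) ^ 2 + 49 * ε ^ 2 * (s + r)) := by
        have hMB : M + 2 ≤ 2 + r + 10 * s := by linarith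
        have hε2ε : ε ^ 2 ≤ ε := by nlinarith
        have hsr : 0 ≤ ε ^ 2 * (s + r) := by positivity
        calc ε * #T * M ^ 2 + 12 * (M + 2) ^ 2 * (4 * ε ^ 2 * #T)
            = #T * (ε * M ^ 2 + 48 * (ε ^ 2 * (M + 2) ^ 2)) := by ring
          _ ≤ #T * (ε * (2 + r + 10 * s) ^ 2 + 48 * (ε * (2 + r + 10 * s) ^ 2)) := by
              gcongr; linarith
          _ ≤ #T * (49 * ε * (2 + r + 10 * s) ^ 2 + 49 * ε ^ 2 * (s + r)) := by
              gcongr #T * ?_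
              linarith
end
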